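/- Let Y be a δ-hyperbolic geodesic metric space and let G be a group acting on Y by isometries such that some orbit of G is ρ-dense in Y, for some ρ > 0. Then either the diameter of Y is at most 4δ + 4ρ + 3, or the diameter of Y is infinite. -/

import Mathlib

open Metric Set
open scoped ENNReal

noncomputable section

/-- A parametrized path segment in a metric space: a continuous map defined on a
real interval `[a, b]`. -/
structure PathSeg (X : Type*) [MetricSpace X] where
  a : ℝ
  b : ℝ
  hab : a ≤ b
  f : ℝ → X
  cont : ContinuousOn f (Set.Icc a b)

namespace PathSeg

variable {X : Type*} [MetricSpace X]

/-- The starting point of a path segment. -/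
def start (γ : PathSeg X) : X := γ.f γ.a

/-- The end point of a path segment. -/
def last (γ : PathSeg X) : X := γ.f γ.b

/-- The image of a path segment. -/
def im (γ : PathSeg X) : Set X := γ.f '' Set.Icc γ.a γ.b

/-- The midpoint of a path segment (the point at half the domain length). -/
def midpt (γ : PathSeg X) : X := γ.f ((γ.a + γ.b) / 2)

/-- The domain length of a path segment. -/
def dlen (γ : PathSeg X) : ℝ := γ.b - γ.a

/-- The (arc) length of a path segment, as an extended nonnegative real. -/
def elength (γ : PathSeg X) : ℝ≥0∞ := eVariationOn γ.f (Set.Icc γ.a γ.b)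

/-- The restriction of a path segment to a subinterval. -/
def restrict (γ : PathSeg X) {s t : ℝ} (h1 : γ.a ≤ s) (h2 : s ≤ t) (h3 : t ≤ γ.b) :
    PathSeg X :=
  ⟨s, t, h2, γ.f, γ.cont.mono (Set.Icc_subset_Icc h1 h3)⟩

/-- The reverse of a path segment. -/
def reverse (γ : PathSeg X) : PathSeg X where
  a := γ.a
  b := γ.b
  hab := γ.hab
  f := fun t => γ.f (γ.a + γ.b - t)
  cont := by
    have h1 : ContinuousOn (fun t : ℝ => γ.a + γ.b - t) (Set.Icc γ.a γ.b) :=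
      (continuous_const.sub continuous_id).continuousOn
    have h2 : Set.MapsTo (fun t : ℝ => γ.a + γ.b - t) (Set.Icc γ.a γ.b)
        (Set.Icc γ.a γ.b) := by
      intro t ht
      simp only [Set.mem_Icc] at ht ⊢
      constructor <;> linarith [ht.1, ht.2]
    exact γ.cont.comp h1 h2

/-- Evaluation of a path segment extended to all of `ℝ` by constants. -/
def evalExt (γ : PathSeg X) (t : ℝ) : X := γ.f (max γ.a (min t γ.b))

/-- The image of a path segment under an isometric equivalence. -/
def mapIso (γ : PathSeg X) (φ : X ≃ᵢ X) : PathSeg X :=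
  ⟨γ.a, γ.b, γ.hab, fun t => φ (γ.f t), φ.continuous.comp_continuousOn γ.cont⟩

end PathSeg

variable {X : Type*} [MetricSpace X]

/-- `γ'` is a subsegment of `γ`: up to a translation of the parameter, `γ'` is the
restriction of `γ` to a subinterval. -/
def IsSubseg (γ' γ : PathSeg X) : Prop :=
  ∃ c : ℝ, γ.a ≤ γ'.a + c ∧ γ'.b + c ≤ γ.b ∧ ∀ t ∈ Set.Icc γ'.a γ'.b, γ'.f t = γ.f (t + c)

/-- A path segment is a `(lam, kap)`-quasi-geodesic. -/
def IsQG (lam kap : ℝ) (γ : PathSeg X) : Prop :=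
  ∀ s ∈ Set.Icc γ.a γ.b, ∀ t ∈ Set.Icc γ.a γ.b,
    |s - t| / lam - kap ≤ dist (γ.f s) (γ.f t) ∧
      dist (γ.f s) (γ.f t) ≤ lam * |s - t| + kap

/-- A path segment is a geodesic (parametrized by arc length). -/
def IsGeodesicSeg (γ : PathSeg X) : Prop :=
  ∀ s ∈ Set.Icc γ.a γ.b, ∀ t ∈ Set.Icc γ.a γ.b, dist (γ.f s) (γ.f t) = |s - t|

/-- A metric space is geodesic: any two points are joined by a geodesic segment. -/
def IsGeodesicSpace (X : Type*) [MetricSpace X] : Prop :=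
  ∀ x y : X, ∃ γ : PathSeg X, γ.start = x ∧ γ.last = y ∧ IsGeodesicSeg γ

/-- A heap of paths: a set of uniform `(lam, kap)`-quasi-geodesic segments containing, for
every point, a trivial path at that point. -/
def IsHeap (lam kap : ℝ) (Q : Set (PathSeg X)) : Prop :=
  (∀ γ ∈ Q, IsQG lam kap γ) ∧ ∀ x : X, ∃ γ ∈ Q, γ.a = γ.b ∧ γ.start = x

/-- The consistent closure of a heap of paths: all subsegments of its paths. -/
def cclosure (Q : Set (PathSeg X)) : Set (PathSeg X) :=
  {γ' | ∃ γ ∈ Q, IsSubseg γ' γ}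

/-- A heap of paths is undirected if it is closed under reversal. -/
def Undirected (Q : Set (PathSeg X)) : Prop :=
  ∀ γ ∈ Q, γ.reverse ∈ Q

/-- A path system: a heap of paths which is equal to its consistent closure and joins
every pair of points. -/
def IsPathSystem (lam kap : ℝ) (P : Set (PathSeg X)) : Prop :=
  IsHeap lam kap P ∧ cclosure P = P ∧ ∀ x y : X, ∃ γ ∈ P, γ.start = x ∧ γ.last = y

/-- A polygonal line: a nonempty concatenable list of path segments. -/
structure PolyLine (X : Type*) [MetricSpace X] where
  segs : List (PathSeg X)
  ne : segs ≠ []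
  chain : segs.Chain' fun p q => p.last = q.start

namespace PolyLine

/-- The starting point of a polygonal line. -/
def start (α : PolyLine X) : X := (α.segs.head α.ne).start

/-- The end point of a polygonal line. -/
def last (α : PolyLine X) : X := (α.segs.getLast α.ne).last

/-- The image of a polygonal line. -/
def im (α : PolyLine X) : Set X := {x | ∃ γ ∈ α.segs, x ∈ γ.im}

/-- The total length of a polygonal line. -/
def elength (α : PolyLine X) : ℝ≥0∞ := (α.segs.map PathSeg.elength).sum

/-- `α` is an `(n, Q)`-polygonal line: a concatenation of at most `n` paths of `Q`. -/
def IsPoly (α : PolyLine X) (Q : Set (PathSeg X)) (n : ℕ) : Prop :=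
  α.segs.length ≤ n ∧ ∀ γ ∈ α.segs, γ ∈ Q

end PolyLine

/-- A heap of paths `Q` is `(C, k)`-navigable: any polygonal line avoiding a ball, whose
endpoints are at controlled distance from the centre, can be replaced by a polygonal line
with the same endpoints, of controlled length, avoiding a proportional ball. -/
def IsNavigable (C : ℝ) (k : ℕ) (Q : Set (PathSeg X)) : Prop :=
  ∀ R : ℝ, C ≤ R → ∀ m : X, ∀ n : ℕ, ∀ α : PolyLine X,
    α.IsPoly Q n → (∀ x ∈ α.im, R ≤ dist x m) →
    dist α.start m ≤ 2 * R → dist α.last m ≤ 2 * R →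
    ∃ p : PolyLine X, p.IsPoly (cclosure Q) (k * n) ∧
      p.start = α.start ∧ p.last = α.last ∧
      p.elength ≤ ENNReal.ofReal (C * n * R) ∧
      ∀ x ∈ p.im, R / C < dist x m

/-- A heap of paths is navigable if it is `(C, k)`-navigable for some constants. -/
def Navigable (Q : Set (PathSeg X)) : Prop :=
  ∃ (C : ℝ) (k : ℕ), 1 ≤ C ∧ 1 ≤ k ∧ IsNavigable C k Q

/-- A subset `A` is `P`-contracting with constant `C`. -/
def PContractingWith (P : Set (PathSeg X)) (C : ℝ) (A : Set X) : Prop :=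
  ∃ π : X → X, (∀ x : X, π x ∈ A) ∧ (∀ x ∈ A, dist x (π x) ≤ C) ∧
    ∀ x y : X, C ≤ dist (π x) (π y) → ∀ γ ∈ P, γ.start = x → γ.last = y →
      (∃ u ∈ γ.im, dist u (π x) ≤ C) ∧ ∃ u ∈ γ.im, dist u (π y) ≤ C

/-- A Morse gauge. -/
structure MorseGauge where
  M : ℝ → ℝ → ℝ
  nonneg : ∀ Q q, 0 ≤ M Q q
  mono : ∀ Q Q' q q', Q ≤ Q' → q ≤ q' → M Q q ≤ M Q' q'
  cont : ∀ Q, Continuous (M Q)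

/-- A path segment is `M`-Morse: every `(Q, q)`-quasi-geodesic with endpoints on it stays
in the `M Q q`-neighbourhood of the corresponding subsegment. -/
def IsMorse (M : MorseGauge) (γ : PathSeg X) : Prop :=
  ∀ Q q : ℝ, 1 ≤ Q → 0 ≤ q → ∀ s ∈ Set.Icc γ.a γ.b, ∀ t ∈ Set.Icc γ.a γ.b, s ≤ t →
    ∀ η : PathSeg X, IsQG Q q η → η.start = γ.f s → η.last = γ.f t →
      ∀ x ∈ η.im, ∃ y ∈ γ.f '' Set.Icc s t, dist x y ≤ M.M Q q

/-- `γ` is `(eps, A; n, P)`-proportionally thin. -/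
def PropThin (P : Set (PathSeg X)) (eps A : ℝ) (n : ℕ) (γ : PathSeg X) : Prop :=
  ∀ α : PolyLine X, α.IsPoly P n → α.start = γ.last → α.last = γ.start →
    α.elength ≤ ENNReal.ofReal (A * dist γ.start γ.last) →
    ∀ x ∈ γ.im, ∃ y ∈ α.im, dist x y ≤ eps * dist γ.start γ.last

/-- `γ` is `(R; eps, A; n, P)`-weakly polygonally Morse. -/
def WPM (P : Set (PathSeg X)) (R eps A : ℝ) (n : ℕ) (γ : PathSeg X) : Prop :=
  ∀ (s t : ℝ) (h1 : γ.a ≤ s) (h2 : s ≤ t) (h3 : t ≤ γ.b), R ≤ t - s →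
    PropThin P eps A n (γ.restrict h1 h2 h3)

/-- A heap of paths is `kap`-bounded. -/
def BoundedHeap (kap : ℝ) (Q : Set (PathSeg X)) : Prop :=
  ∀ h ∈ Q, ∀ y' : X, dist h.last y' ≤ 1 →
    ∃ h' ∈ Q, h'.start = h.start ∧ h'.last = y' ∧ hausdorffDist h.im h'.im ≤ kap

/-- A path system is `kap`-sub-bounded: it contains a `kap`-bounded heap of paths joining
every pair of points. -/
def SubBounded (kap : ℝ) (P : Set (PathSeg X)) : Prop :=
  ∃ Q : Set (PathSeg X), Q ⊆ P ∧ BoundedHeap kap Q ∧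
    ∀ x y : X, ∃ h ∈ Q, h.start = x ∧ h.last = y

/-- A heap of paths is `(C, k)`-avoidant. -/
def Avoidant (C : ℝ) (k : ℕ) (Q : Set (PathSeg X)) : Prop :=
  ∀ R : ℝ, C / 2 ≤ R → ∀ y z1 z2 m : X, dist m z1 ≤ 4 * R → dist m z2 ≤ 4 * R →
    ∀ h1 ∈ Q, ∀ h2 ∈ Q, h1.start = z1 → h1.last = y → h2.start = z2 → h2.last = y →
      (∀ x ∈ h1.im, R < dist x m) → (∀ x ∈ h2.im, R < dist x m) →
      ∃ p : PolyLine X, p.IsPoly (cclosure Q) k ∧ p.start = z1 ∧ p.last = z2 ∧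
        (∀ x ∈ p.im, 2 * R / C < dist x m) ∧ p.elength ≤ ENNReal.ofReal (C * R)

/-- The set of paths from `a` to `b` staying `del * d(c, {a, b}) - eps` away from `c`. -/
def divPaths (eps del : ℝ) (a b c : X) : Set (PathSeg X) :=
  {γ | γ.start = a ∧ γ.last = b ∧
    ∀ x ∈ γ.im, del * min (dist c a) (dist c b) - eps ≤ dist x c}

/-- The divergence `div_eps(a, b, c; del)`: the infimal length of paths from `a` to `b`
avoiding an appropriate ball around `c`. -/
def ediv (eps del : ℝ) (a b c : X) : ℝ≥0∞ :=
  ⨅ (γ : PathSeg X) (_ : γ ∈ divPaths eps del a b c), γ.elength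

/-- The divergence function `Div_eps(n, del)`. -/
def eDivSup (X : Type*) [MetricSpace X] (eps del : ℝ) (n : ℝ) : ℝ≥0∞ :=
  ⨆ (a : X) (b : X) (c : X) (_ : dist a b ≤ n), ediv eps del a b c

/-- A special path is `(r; n, P)`-midthin: every `(n, P)`-polygonal line from its endpoint
to its start point meets the closed `r`-ball around its midpoint. -/
def Midthin (P : Set (PathSeg X)) (r : ℝ) (n : ℕ) (h : PathSeg X) : Prop :=
  ∀ α : PolyLine X, α.IsPoly P n → α.start = h.last → α.last = h.start →
    ∃ x ∈ α.im, dist x h.midpt ≤ r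

/-- A special path is `(K, n, P)`-midthin (with some neck-size `r`). -/
def KMidthin (K : ℝ → ℝ≥0∞) (n : ℕ) (P : Set (PathSeg X)) (h : PathSeg X) : Prop :=
  ∃ r : ℝ, 0 ≤ r ∧ Midthin P r n h ∧ K r ≤ ENNReal.ofReal h.dlen

/-- A special path is `(K, n, P)`-anti-contracting: no subsegment is midthin. -/
def AntiContracting (K : ℝ → ℝ≥0∞) (n : ℕ) (P : Set (PathSeg X)) (h : PathSeg X) : Prop :=
  ∀ h' : PathSeg X, IsSubseg h' h → ¬ KMidthin K n P h'

/-- A pair of points is `(K, n, P)`-anti-contracting: some special path joining them is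
anti-contracting. -/
def PairAntiContracting (K : ℝ → ℝ≥0∞) (n : ℕ) (P : Set (PathSeg X)) (x y : X) : Prop :=
  ∃ h ∈ P, h.start = x ∧ h.last = y ∧ AntiContracting K n P h

/-- A full contraction gauge: non-decreasing and never infinite. -/
def FullGauge (K : ℝ → ℝ≥0∞) : Prop :=
  Monotone K ∧ ∀ r, K r ≠ ⊤

/-- A structure of a (connected) graph on a metric space: the vertex set is half-dense and
distances between vertices are integers. -/
structure GraphStruct (X : Type*) [MetricSpace X] where
  V : Set X
  half_dense : ∀ x : X, ∃ v ∈ V, dist x v ≤ 1 / 2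
  int_dist : ∀ v ∈ V, ∀ w ∈ V, ∃ m : ℕ, dist v w = m

/-- Adjacency in the generalized contraction space: points at distance at most `1`
(edges of `X`) or anti-contracting pairs of vertices (the added edges). -/
def HatAdj (K : ℝ → ℝ≥0∞) (n : ℕ) (P : Set (PathSeg X)) (V : Set X) (x y : X) : Prop :=
  dist x y ≤ 1 ∨ (x ∈ V ∧ y ∈ V ∧ PairAntiContracting K n P x y)

/-- A chain of `m` steps of an adjacency relation. -/
def HatChain {Y : Type*} (Adj : Y → Y → Prop) (x y : Y) (m : ℕ) : Prop :=
  ∃ c : ℕ → Y, c 0 = x ∧ c m = y ∧ ∀ i < m, Adj (c i) (c (i + 1))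

/-- The path (chain) metric associated to an adjacency relation. -/
def hatDist {Y : Type*} (Adj : Y → Y → Prop) (x y : Y) : ℝ≥0∞ :=
  ⨅ (m : ℕ) (_ : HatChain Adj x y m), (m : ℝ≥0∞)

/-- A path segment is a parametrized `Q`-quasi-geodesic for the chain metric `hatDist Adj`. -/
def HatQG (Adj : X → X → Prop) (Q : ℝ) (γ : PathSeg X) : Prop :=
  ∀ s ∈ Set.Icc γ.a γ.b, ∀ t ∈ Set.Icc γ.a γ.b,
    ENNReal.ofReal (|s - t| / Q - Q) ≤ hatDist Adj (γ.f s) (γ.f t) ∧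
      hatDist Adj (γ.f s) (γ.f t) ≤ ENNReal.ofReal (Q * |s - t| + Q)

/-- A (metrically) proper action: bounded sets have finite stabilizing sets. -/
def ProperAction (G X : Type*) [Group G] [MetricSpace X] [MulAction G X] : Prop :=
  ∀ B : Set X, Bornology.IsBounded B → {g : G | ((fun x => g • x) '' B ∩ B).Nonempty}.Finite

/-- A cobounded action: some orbit is `ρ`-dense. -/
def CoboundedAction (G X : Type*) [Group G] [MetricSpace X] [MulAction G X] : Prop :=
  ∃ ρ : ℝ, 0 < ρ ∧ ∃ x0 : X, ∀ x : X, ∃ g : G, dist x (g • x0) ≤ ρ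

/-- A group is virtually cyclic if it has a cyclic subgroup of finite index. -/
def VirtuallyCyclic (G : Type*) [Group G] : Prop :=
  ∃ H : Subgroup G, H.FiniteIndex ∧ IsCyclic H

/-- A set of paths is invariant under an isometric group action. -/
def PathSysInvariant (G : Type*) {X : Type*} [Group G] [MetricSpace X] [MulAction G X]
    [IsIsometricSMul G X] (P : Set (PathSeg X)) : Prop :=
  ∀ g : G, ∀ γ ∈ P, γ.mapIso (IsometryEquiv.constSMul g) ∈ P

/-- The four-point (Gromov) hyperbolicity condition with constant `δ`. -/
def FourPointHyperbolic (δ : ℝ) (Y : Type*) [MetricSpace Y] : Prop :=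
  ∀ x y z w : Y, dist x y + dist z w ≤ max (dist x z + dist y w) (dist x w + dist y z) + 2 * δ

/-- A group is acylindrically hyperbolic: it admits a non-elementary acylindrical action by
isometries on a geodesic Gromov-hyperbolic space. -/
def AcylindricallyHyperbolic (G : Type*) [Group G] : Prop :=
  ∃ (Y : Type) (_ : MetricSpace Y) (φ : G →* (Y ≃ᵢ Y)),
    IsGeodesicSpace Y ∧
    (∃ δ : ℝ, 0 ≤ δ ∧ FourPointHyperbolic δ Y) ∧
    (∀ ε : ℝ, 0 < ε → ∃ (R : ℝ) (N : ℕ), ∀ x y : Y, R ≤ dist x y →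
      {g : G | dist x (φ g x) < ε ∧ dist y (φ g y) < ε}.Finite ∧
      {g : G | dist x (φ g x) < ε ∧ dist y (φ g y) < ε}.ncard ≤ N) ∧
    (∀ y : Y, ¬ Bornology.IsBounded (Set.range fun g : G => φ g y)) ∧
    ¬ VirtuallyCyclic G

/-- A `C`-quasi-isometry. -/
def QuasiIsometry {X Y : Type*} [MetricSpace X] [MetricSpace Y] (C : ℝ) (f : X → Y) : Prop :=
  (∀ y : Y, ∃ x : X, dist y (f x) ≤ C) ∧
    ∀ x x' : X, dist x x' / C - C ≤ dist (f x) (f x') ∧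
      dist (f x) (f x') ≤ C * dist x x' + C

/-- The core of the push-forward of a path system by a map `f`: paths of the form
(geodesic) * (rectification of `f ∘ h`) * (geodesic), for `h ∈ P`. -/
def PushForwardCore {X Y : Type*} [MetricSpace X] [MetricSpace Y] (C : ℝ) (f : X → Y)
    (P : Set (PathSeg X)) : Set (PathSeg Y) :=
  {p | ∃ h ∈ P, ∃ t1 t2 : ℝ, p.a ≤ t1 ∧ t1 ≤ t2 ∧ t2 ≤ p.b ∧
    p.f t1 = f h.start ∧ p.f t2 = f h.last ∧
    dist p.start (f h.start) ≤ C ∧ dist p.last (f h.last) ≤ C ∧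
    (∀ s ∈ Set.Icc p.a t1, ∀ t ∈ Set.Icc p.a t1, dist (p.f s) (p.f t) = |s - t|) ∧
    (∀ s ∈ Set.Icc t2 p.b, ∀ t ∈ Set.Icc t2 p.b, dist (p.f s) (p.f t) = |s - t|) ∧
    ∃ u : ℕ → ℝ, u 0 = t1 ∧ u (Nat.ceil (h.b - h.a)) = t2 ∧
      (∀ i < Nat.ceil (h.b - h.a), u i ≤ u (i + 1)) ∧
      (∀ i ≤ Nat.ceil (h.b - h.a), p.f (u i) = f (h.f (min (h.a + (i : ℝ)) h.b))) ∧
      ∀ i < Nat.ceil (h.b - h.a), ∀ s ∈ Set.Icc (u i) (u (i + 1)),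
        ∀ t ∈ Set.Icc (u i) (u (i + 1)), dist (p.f s) (p.f t) = |s - t|}

/-- The push-forward of a path system: all subsegments of core push-forward paths. -/
def PushForward {X Y : Type*} [MetricSpace X] [MetricSpace Y] (C : ℝ) (f : X → Y)
    (P : Set (PathSeg X)) : Set (PathSeg Y) :=
  cclosure (PushForwardCore C f P)

/-- The directional closure of a heap of paths: the heap together with all reversals. -/
def DirClosure {Y : Type*} [MetricSpace Y] (Q : Set (PathSeg Y)) : Set (PathSeg Y) :=
  Q ∪ PathSeg.reverse '' Q

/-- The combing heap of a combing: all combing lines, their reverses, and trivial paths. -/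
def combingHeap (c : X → X → PathSeg X) : Set (PathSeg X) :=
  {γ | (∃ x y, γ = c x y) ∨ (∃ x y, γ = (c x y).reverse) ∨ γ.a = γ.b}

/-- A median metric space. -/
def MedianSpace (X : Type*) [MetricSpace X] : Prop :=
  ∀ x y z : X, ∃! m : X, dist x m + dist m y = dist x y ∧
    dist y m + dist m z = dist y z ∧ dist x m + dist m z = dist x z

/-- The set of closest points of `A` to `x`. -/
def projSet (A : Set X) (x : X) : Set X :=
  {y ∈ A | dist x y = infDist x A}

/-- A subset is `C`-strongly contracting: closest-point projections of balls disjoint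
from it have diameter at most `C`. -/
def StronglyContracting (C : ℝ) (A : Set X) : Prop :=
  ∀ (c : X) (r : ℝ), Metric.ball c r ∩ A = ∅ →
    Metric.diam {y | ∃ x ∈ Metric.ball c r, y ∈ projSet A x} ≤ C

/-- Thin geodesic triangles with constant `δ`. -/
def ThinTriangles (δ : ℝ) (Y : Type*) [MetricSpace Y] : Prop :=
  ∀ γ1 γ2 γ3 : PathSeg Y, IsGeodesicSeg γ1 → IsGeodesicSeg γ2 → IsGeodesicSeg γ3 →
    γ1.last = γ2.start → γ2.last = γ3.start → γ3.last = γ1.start →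
    ∀ p ∈ γ1.im, ∃ q ∈ γ2.im ∪ γ3.im, dist p q ≤ δ

end

/-!
If `Y` is bounded, take a geodesic `[x, y]` with midpoint `m`. Thinness of a triangle `x y z`
puts `m` within `δ` of `[y, z]` or `[z, x]`, so `d(m, z) ≤ diam Y - d(x, y) / 2 + 2δ` for every
`z`. Since every orbit of `G` is `2ρ`-dense, translates of `m` come within `2ρ` of every point,
hence `diam Y ≤ 2ρ + diam Y - d(x, y) / 2 + 2δ`, i.e. `d(x, y) ≤ 4δ + 4ρ`.
-/

open Bornology

variable {Y : Type*} [MetricSpace Y]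

lemma IsGeodesicSeg.dist_start_last {γ : PathSeg Y} (hγ : IsGeodesicSeg γ) :
    dist γ.start γ.last = γ.b - γ.a := by
  rw [PathSeg.start, PathSeg.last, hγ _ ⟨le_rfl, γ.hab⟩ _ ⟨γ.hab, le_rfl⟩, abs_sub_comm,
    abs_of_nonneg (sub_nonneg.2 γ.hab)]

lemma IsGeodesicSeg.dist_add_dist_of_mem_im {γ : PathSeg Y} (hγ : IsGeodesicSeg γ) {q : Y}
    (hq : q ∈ γ.im) : dist γ.start q + dist q γ.last = dist γ.start γ.last := by
  obtain ⟨t, ht, rfl⟩ := hq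
  rw [hγ.dist_start_last, PathSeg.start, PathSeg.last, hγ _ ⟨le_rfl, γ.hab⟩ _ ht,
    hγ _ ht _ ⟨γ.hab, le_rfl⟩, abs_of_nonpos (by linarith [ht.1]),
    abs_of_nonpos (by linarith [ht.2])]
  ring

lemma PathSeg.midpt_mem_im (γ : PathSeg Y) : γ.midpt ∈ γ.im :=
  ⟨(γ.a + γ.b) / 2, ⟨by linarith [γ.hab], by linarith [γ.hab]⟩, rfl⟩

lemma IsGeodesicSeg.dist_start_midpt {γ : PathSeg Y} (hγ : IsGeodesicSeg γ) :
    dist γ.start γ.midpt = dist γ.start γ.last / 2 := by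
  rw [hγ.dist_start_last, PathSeg.start, PathSeg.midpt,
    hγ _ ⟨le_rfl, γ.hab⟩ _ ⟨by linarith [γ.hab], by linarith [γ.hab]⟩,
    abs_of_nonpos (by linarith [γ.hab])]
  ring

lemma IsGeodesicSeg.dist_midpt_last {γ : PathSeg Y} (hγ : IsGeodesicSeg γ) :
    dist γ.midpt γ.last = dist γ.start γ.last / 2 := by
  linarith [hγ.dist_add_dist_of_mem_im γ.midpt_mem_im, hγ.dist_start_midpt]

lemma dist_le_of_dist_le_of_between {a b q m : Y} {δ : ℝ}
    (hq : dist a q + dist q b = dist a b) (hm : dist m q ≤ δ) :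
    dist m b ≤ dist a b - dist a m + 2 * δ := by
  linarith [dist_triangle m q b, dist_triangle a q m, dist_comm q m]

lemma ThinTriangles.dist_midpt_le {δ : ℝ} (hhyp : ThinTriangles δ Y) (hgeo : IsGeodesicSpace Y)
    {γ : PathSeg Y} (hγ : IsGeodesicSeg γ) (z : Y) :
    dist γ.midpt z ≤ max (dist γ.last z) (dist γ.start z) - dist γ.start γ.last / 2 + 2 * δ := by
  obtain ⟨γ₂, h₂s, h₂l, hγ₂⟩ := hgeo γ.last z
  obtain ⟨γ₃, h₃s, h₃l, hγ₃⟩ := hgeo z γ.start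
  obtain ⟨q, hq | hq, hmq⟩ := hhyp γ γ₂ γ₃ hγ hγ₂ hγ₃ h₂s.symm (h₂l.trans h₃s.symm) h₃l
    γ.midpt γ.midpt_mem_im
  · have hbetween := hγ₂.dist_add_dist_of_mem_im hq
    rw [h₂s, h₂l] at hbetween
    have := dist_le_of_dist_le_of_between hbetween hmq
    linarith [le_max_left (dist γ.last z) (dist γ.start z), dist_comm γ.last γ.midpt,
      hγ.dist_midpt_last]
  · have hbetween := hγ₃.dist_add_dist_of_mem_im hq
    rw [h₃s, h₃l] at hbetween
    have := dist_le_of_dist_le_of_between (a := γ.start) (b := z)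
      (by linarith [dist_comm γ.start q, dist_comm q z, dist_comm γ.start z]) hmq
    linarith [le_max_right (dist γ.last z) (dist γ.start z), hγ.dist_start_midpt]

lemma exists_dist_smul_le_of_dense_orbit {G : Type*} [Group G] [MulAction G Y]
    [IsIsometricSMul G Y] {ρ : ℝ} {y₀ : Y} (hdense : ∀ y : Y, ∃ g : G, dist y (g • y₀) ≤ ρ)
    (z w : Y) : ∃ k : G, dist z (k • w) ≤ 2 * ρ := by
  obtain ⟨h, hz⟩ := hdense z
  obtain ⟨g, hw⟩ := hdense w
  refine ⟨h * g⁻¹, ?_⟩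
  have hy₀ : h • y₀ = (h * g⁻¹) • g • y₀ := by rw [smul_smul, inv_mul_cancel_right]
  calc dist z ((h * g⁻¹) • w) ≤ dist z (h • y₀) + dist (h • y₀) ((h * g⁻¹) • w) :=
        dist_triangle _ _ _
    _ ≤ ρ + ρ := add_le_add hz (by rwa [hy₀, dist_smul, dist_comm])
    _ = 2 * ρ := by ring

theorem ThinTriangles.dist_le_of_dense_orbit_of_isBounded {δ ρ : ℝ} (hhyp : ThinTriangles δ Y)
    (hgeo : IsGeodesicSpace Y) {G : Type*} [Group G] [MulAction G Y] [IsIsometricSMul G Y]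
    {y₀ : Y} (hdense : ∀ y : Y, ∃ g : G, dist y (g • y₀) ≤ ρ) (hb : IsBounded (univ : Set Y))
    (x y : Y) :
    dist x y ≤ 4 * δ + 4 * ρ := by
  set D := diam (univ : Set Y)
  have hD : ∀ a b : Y, dist a b ≤ D := fun a b => dist_le_diam_of_mem hb trivial trivial
  obtain ⟨γ, rfl, rfl, hγ⟩ := hgeo x y
  have key : ∀ z z' : Y, dist z z' ≤ 2 * ρ + D - dist γ.start γ.last / 2 + 2 * δ := by
    intro z z'
    obtain ⟨k, hk⟩ := exists_dist_smul_le_of_dense_orbit hdense z γ.midpt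
    have hm := hhyp.dist_midpt_le hgeo hγ (k⁻¹ • z')
    have hmax := max_le (hD γ.last (k⁻¹ • z')) (hD γ.start (k⁻¹ • z'))
    calc dist z z' ≤ dist z (k • γ.midpt) + dist (k • γ.midpt) z' := dist_triangle _ _ _
      _ = dist z (k • γ.midpt) + dist γ.midpt (k⁻¹ • z') := by
          rw [← dist_smul k γ.midpt, smul_inv_smul]
      _ ≤ 2 * ρ + D - dist γ.start γ.last / 2 + 2 * δ := by linarith
  have hDle : D ≤ 2 * ρ + D - dist γ.start γ.last / 2 + 2 * δ :=
    diam_le_of_forall_dist_le (dist_self γ.start ▸ key γ.start γ.start) fun z _ z' _ => key z z'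
  linarith

theorem weak_diameter_dichotomy_general
    (Y : Type) [MetricSpace Y] (hgeo : IsGeodesicSpace Y)
    (δ : ℝ) (hhyp : ThinTriangles δ Y)
    (G : Type) [Group G] [MulAction G Y] [IsIsometricSMul G Y]
    (ρ : ℝ) (y0 : Y) (hdense : ∀ y : Y, ∃ g : G, dist y (g • y0) ≤ ρ) :
    EMetric.diam (Set.univ : Set Y) ≤ ENNReal.ofReal (4 * δ + 4 * ρ + 3) ∨
    EMetric.diam (Set.univ : Set Y) = ⊤ := by
  refine or_iff_not_imp_right.2 fun hfin => ediam_le fun x _ y _ => ?_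
  have hb : IsBounded (univ : Set Y) := isBounded_iff_ediam_ne_top.2 hfin
  rw [edist_dist]
  exact ENNReal.ofReal_le_ofReal
    (by linarith [hhyp.dist_le_of_dense_orbit_of_isBounded hgeo hdense hb x y])

/-- **Weak diameter dichotomy.** Let `Y` be a `δ`-hyperbolic geodesic metric space and
`G` a group acting on `Y` by isometries with a `ρ`-dense orbit. Then either the diameter
of `Y` is at most `4δ + 4ρ + 3`, or it is infinite. -/
theorem weak_diameter_dichotomy
    (Y : Type) [MetricSpace Y] (hgeo : IsGeodesicSpace Y)
    (δ : ℝ) (hδ : 0 ≤ δ) (hhyp : ThinTriangles δ Y)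
    (G : Type) [Group G] [MulAction G Y] [IsIsometricSMul G Y]
    (ρ : ℝ) (hρ : 0 < ρ) (y0 : Y) (hdense : ∀ y : Y, ∃ g : G, dist y (g • y0) ≤ ρ) :
    EMetric.diam (Set.univ : Set Y) ≤ ENNReal.ofReal (4 * δ + 4 * ρ + 3) ∨
    EMetric.diam (Set.univ : Set Y) = ⊤ :=
  weak_diameter_dichotomy_general Y hgeo δ hhyp G ρ y0 hdense
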